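/- arXiv:gr-qc/9503038 — 3 statements merged into one kernel-verified Lean document; each statement's English description precedes it below -/
import Mathlib

section
/- With L, s as in the canonical energy-momentum conservation law, and Γ^i_μ(x, y) smooth functions (a connection), the tensor T_Γ^λ_μ = Σ_i π^λ_i (∂_μ s^i − Γ^i_μ(x, s(x))) − δ^λ_μ L satisfies Σ_λ d/dx^λ T_Γ^λ_μ = −[∂_μ + Σ_i Γ^i_μ ∂_{y^i} + Σ_{i,λ} (∂_λ Γ^i_μ + Σ_j ∂_λ s^j ∂_{y^j} Γ^i_μ) ∂_{v^λ_i}] L, all evaluated along (x, s(x), Ds(x)). -/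
private lemma pi_decomp {k : ℕ} (a : Fin k → ℝ) :
    a = ∑ l : Fin k, a l • (Pi.single l 1 : Fin k → ℝ) := by
  funext j
  simp [Pi.single_apply, Finset.sum_apply, mul_ite]

private lemma mat_decomp {m n : ℕ} (c : Fin m → Fin n → ℝ) :
    c = ∑ i : Fin m, ∑ l : Fin n, c i l • (Pi.single i (Pi.single l 1) : Fin m → Fin n → ℝ) := by
  funext i' l'
  rw [Finset.sum_apply, Finset.sum_apply]
  simp [apply_ite (fun f : Fin n → ℝ => f l'), Pi.single_apply, mul_ite]

private lemma clm_decomp' {n m : ℕ}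
    (φ : ((Fin n → ℝ) × (Fin m → ℝ) × (Fin m → Fin n → ℝ)) →L[ℝ] ℝ)
    (a : Fin n → ℝ) (b : Fin m → ℝ) (c : Fin m → Fin n → ℝ) :
    φ (a, b, c) = φ (a, 0, 0)
      + (∑ i : Fin m, b i * φ (0, Pi.single i 1, 0))
      + ∑ i : Fin m, ∑ l : Fin n, c i l * φ (0, 0, Pi.single i (Pi.single l 1)) := by
  have h1 : (a, b, c) = ((a,0,0) : (Fin n → ℝ) × (Fin m → ℝ) × (Fin m → Fin n → ℝ))
      + (0,b,0) + (0,0,c) := by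
    simp [Prod.ext_iff]
  rw [h1, map_add, map_add]
  have e2 : ((0, b, 0) : (Fin n → ℝ) × (Fin m → ℝ) × (Fin m → Fin n → ℝ))
      = ∑ i : Fin m, b i • ((0, Pi.single i 1, 0) :
          (Fin n → ℝ) × (Fin m → ℝ) × (Fin m → Fin n → ℝ)) := by
    rw [Prod.ext_iff, Prod.ext_iff]
    refine ⟨by simp [Prod.fst_sum], ?_, by simp [Prod.snd_sum]⟩
    · simpa [Prod.fst_sum, Prod.snd_sum] using pi_decomp b
  have e3 : ((0, 0, c) : (Fin n → ℝ) × (Fin m → ℝ) × (Fin m → Fin n → ℝ))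
      = ∑ i : Fin m, ∑ l : Fin n, c i l • ((0, 0, Pi.single i (Pi.single l 1)) :
          (Fin n → ℝ) × (Fin m → ℝ) × (Fin m → Fin n → ℝ)) := by
    rw [Prod.ext_iff, Prod.ext_iff]
    refine ⟨by simp [Prod.fst_sum], by simp [Prod.fst_sum, Prod.snd_sum], ?_⟩
    · simpa [Prod.fst_sum, Prod.snd_sum] using mat_decomp c
  rw [e2, e3]
  simp only [map_sum, map_smul, smul_eq_mul]

private lemma clm_decomp2 {n m : ℕ}
    (ψ : ((Fin n → ℝ) × (Fin m → ℝ)) →L[ℝ] (Fin m → Fin n → ℝ))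
    (a : Fin n → ℝ) (b : Fin m → ℝ) (i : Fin m) (μ : Fin n) :
    ψ (a, b) i μ = ψ (a, 0) i μ + ∑ jj : Fin m, b jj * ψ (0, Pi.single jj 1) i μ := by
  have h1 : (a, b) = ((a, 0) : (Fin n → ℝ) × (Fin m → ℝ))
      + ∑ jj : Fin m, b jj • ((0, Pi.single jj 1) : (Fin n → ℝ) × (Fin m → ℝ)) := by
    rw [Prod.ext_iff]
    refine ⟨by simp [Prod.fst_sum], ?_⟩
    simpa [Prod.snd_sum] using pi_decomp b
  rw [h1, map_add, map_sum]
  simp only [map_smul, Pi.add_apply, Finset.sum_apply, Pi.smul_apply, smul_eq_mul]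

private lemma fderiv_sum_mul {N k : ℕ} {f g : Fin k → (Fin N → ℝ) → ℝ} {x : Fin N → ℝ}
    (hf : ∀ i, DifferentiableAt ℝ (f i) x) (hg : ∀ i, DifferentiableAt ℝ (g i) x)
    (w : Fin N → ℝ) :
    fderiv ℝ (fun x' => ∑ i, f i x' * g i x') x w
      = ∑ i, (fderiv ℝ (f i) x w * g i x + f i x * fderiv ℝ (g i) x w) := by
  rw [fderiv_fun_sum (fun i _ => (hf i).fun_mul (hg i)), ContinuousLinearMap.sum_apply]
  refine Finset.sum_congr rfl fun i _ => ?_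
  rw [fderiv_fun_mul (hf i) (hg i)]
  simp only [ContinuousLinearMap.add_apply, ContinuousLinearMap.smul_apply, smul_eq_mul]
  ring

private lemma final_alg {n m : ℕ} (Px : ℝ) (Py γ dsμ : Fin m → ℝ)
    (A S C : Fin m → Fin n → ℝ) :
    ((∑ i, Py i * (dsμ i - γ i)) + (∑ i, ∑ l, A i l * (S i l - C i l)))
        - (Px + (∑ i, dsμ i * Py i) + ∑ i, ∑ l, S i l * A i l)
      = -(Px + (∑ i, γ i * Py i) + ∑ i, ∑ l, C i l * A i l) := by
  simp only [mul_sub, sub_mul, Finset.sum_sub_distrib, mul_comm]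
  ring_nf

private lemma fderiv_ds {n m : ℕ} {s : (Fin n → ℝ) → (Fin m → ℝ)} (hs : ContDiff ℝ (⊤ : ℕ∞) s)
    (x v w : Fin n → ℝ) (i : Fin m) :
    fderiv ℝ (fun x' => fderiv ℝ s x' v i) x w = fderiv ℝ (fderiv ℝ s) x w v i := by
  have h : HasFDerivAt (fun x' => fderiv ℝ s x' v i)
      (((ContinuousLinearMap.proj i).comp (ContinuousLinearMap.apply ℝ (Fin m → ℝ) v)).comp
        (fderiv ℝ (fderiv ℝ s) x)) x :=
    (((ContinuousLinearMap.proj i).comp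
        (ContinuousLinearMap.apply ℝ (Fin m → ℝ) v)).hasFDerivAt).comp x
      (((hs.fderiv_right (m := (⊤ : ℕ∞)) (by simp)).differentiable (by simp) x).hasFDerivAt)
  rw [h.fderiv]; rfl

private lemma fderiv_Gamma {n m : ℕ}
    {Γ : (Fin n → ℝ) × (Fin m → ℝ) → (Fin m → Fin n → ℝ)} (hΓ : ContDiff ℝ (⊤ : ℕ∞) Γ)
    {s : (Fin n → ℝ) → (Fin m → ℝ)} (hs : ContDiff ℝ (⊤ : ℕ∞) s)
    (x w : Fin n → ℝ) (i : Fin m) (μ : Fin n) :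
    fderiv ℝ (fun x' => Γ (x', s x') i μ) x w
      = fderiv ℝ Γ (x, s x) (w, fderiv ℝ s x w) i μ := by
  have h1 : HasFDerivAt (fun x' => ((x', s x') : (Fin n → ℝ) × (Fin m → ℝ)))
      ((ContinuousLinearMap.id ℝ (Fin n → ℝ)).prod (fderiv ℝ s x)) x :=
    HasFDerivAt.prodMk (hasFDerivAt_id x) (hs.differentiable (by simp) x).hasFDerivAt
  have h2 : HasFDerivAt (fun x' => Γ (x', s x') i μ)
      ((((ContinuousLinearMap.proj μ : (Fin n → ℝ) →L[ℝ] ℝ).comp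
            (ContinuousLinearMap.proj i : (Fin m → Fin n → ℝ) →L[ℝ] (Fin n → ℝ)))).comp
        ((fderiv ℝ Γ (x, s x)).comp
          ((ContinuousLinearMap.id ℝ (Fin n → ℝ)).prod (fderiv ℝ s x)))) x :=
    ((((ContinuousLinearMap.proj μ : (Fin n → ℝ) →L[ℝ] ℝ).comp
        (ContinuousLinearMap.proj i : (Fin m → Fin n → ℝ) →L[ℝ] (Fin n → ℝ)))).hasFDerivAt).comp x
      (((hΓ.differentiable (by simp) (x, s x)).hasFDerivAt).comp x h1)
  rw [h2.fderiv]; rfl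

private lemma hasFDerivAt_jmap {n m : ℕ} {s : (Fin n → ℝ) → (Fin m → ℝ)}
    (hs : ContDiff ℝ (⊤ : ℕ∞) s) (x : Fin n → ℝ) :
    HasFDerivAt (fun x' => ((x', s x', fun i l => fderiv ℝ s x' (Pi.single l 1) i) :
        (Fin n → ℝ) × (Fin m → ℝ) × (Fin m → Fin n → ℝ)))
      ((ContinuousLinearMap.id ℝ (Fin n → ℝ)).prod ((fderiv ℝ s x).prod
        (ContinuousLinearMap.pi fun i => ContinuousLinearMap.pi fun l =>
          (ContinuousLinearMap.proj i).comp
            ((ContinuousLinearMap.apply ℝ (Fin m → ℝ) (Pi.single l 1)).comp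
              (fderiv ℝ (fderiv ℝ s) x))))) x := by
  refine HasFDerivAt.prodMk (hasFDerivAt_id x) (HasFDerivAt.prodMk ((hs.differentiable (by simp) x).hasFDerivAt) ?_)
  refine hasFDerivAt_pi.2 fun i => hasFDerivAt_pi.2 fun l => ?_
  exact (((ContinuousLinearMap.proj i).comp
      (ContinuousLinearMap.apply ℝ (Fin m → ℝ) (Pi.single l 1))).hasFDerivAt).comp x
    (((hs.fderiv_right (m := (⊤ : ℕ∞)) (by simp)).differentiable (by simp) x).hasFDerivAt)

private lemma fderiv_Lj {n m : ℕ}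
    {L : (Fin n → ℝ) × (Fin m → ℝ) × (Fin m → Fin n → ℝ) → ℝ} (hL : ContDiff ℝ (⊤ : ℕ∞) L)
    {s : (Fin n → ℝ) → (Fin m → ℝ)} (hs : ContDiff ℝ (⊤ : ℕ∞) s) (x w : Fin n → ℝ) :
    fderiv ℝ (fun x' => L (x', s x', fun i l => fderiv ℝ s x' (Pi.single l 1) i)) x w
      = fderiv ℝ L (x, s x, fun i l => fderiv ℝ s x (Pi.single l 1) i)
          (w, fderiv ℝ s x w, fun i l => fderiv ℝ (fderiv ℝ s) x w (Pi.single l 1) i) := by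
  have hj := hasFDerivAt_jmap hs x
  have hd : HasFDerivAt (fun x' => L (x', s x', fun i l => fderiv ℝ s x' (Pi.single l 1) i))
      ((fderiv ℝ L (x, s x, fun i l => fderiv ℝ s x (Pi.single l 1) i)).comp
        ((ContinuousLinearMap.id ℝ (Fin n → ℝ)).prod ((fderiv ℝ s x).prod
          (ContinuousLinearMap.pi fun i => ContinuousLinearMap.pi fun l =>
            (ContinuousLinearMap.proj i).comp
              ((ContinuousLinearMap.apply ℝ (Fin m → ℝ) (Pi.single l 1)).comp
                (fderiv ℝ (fderiv ℝ s) x)))))) x :=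
    ((hL.differentiable (by simp) _).hasFDerivAt).comp x hj
  rw [hd.fderiv]; rfl

/-- Conservation law of the SEM tensor relative to a connection `Γ`:
`Σ_λ d/dx^λ T_Γ^λ_μ = −[∂_μ + Γ^i_μ ∂_{y^i} + (∂_λ Γ^i_μ + ∂_λ s^j ∂_{y^j} Γ^i_μ) ∂_{v^λ_i}] L`
along solutions of the first-order Euler-Lagrange equations. -/
theorem stmt6 (n m : ℕ)
    (L : (Fin n → ℝ) × (Fin m → ℝ) × (Fin m → Fin n → ℝ) → ℝ) (hL : ContDiff ℝ (⊤ : ℕ∞) L)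
    (Γ : (Fin n → ℝ) × (Fin m → ℝ) → (Fin m → Fin n → ℝ)) (hΓ : ContDiff ℝ (⊤ : ℕ∞) Γ)
    (s : (Fin n → ℝ) → (Fin m → ℝ)) (hs : ContDiff ℝ (⊤ : ℕ∞) s)
    (j : (Fin n → ℝ) → (Fin n → ℝ) × (Fin m → ℝ) × (Fin m → Fin n → ℝ))
    (hj : j = fun x => (x, s x, fun i l => fderiv ℝ s x (Pi.single l 1) i))
    (hEL : ∀ (x : Fin n → ℝ) (i : Fin m),
      fderiv ℝ L (j x) (0, Pi.single i 1, 0)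
        = ∑ l : Fin n, fderiv ℝ
            (fun x' => fderiv ℝ L (j x') (0, 0, Pi.single i (Pi.single l 1)))
            x (Pi.single l 1)) :
    ∀ (x : Fin n → ℝ) (μ : Fin n),
      (∑ l : Fin n, fderiv ℝ
          (fun x' =>
            (∑ i : Fin m,
              fderiv ℝ L (j x') (0, 0, Pi.single i (Pi.single l 1))
                * (fderiv ℝ s x' (Pi.single μ 1) i - Γ (x', s x') i μ))
              - (if l = μ then L (j x') else 0))
          x (Pi.single l 1))
        = -(fderiv ℝ L (j x) (Pi.single μ 1, 0, 0)
            + (∑ i : Fin m, Γ (x, s x) i μ * fderiv ℝ L (j x) (0, Pi.single i 1, 0))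
            + ∑ i : Fin m, ∑ l : Fin n,
                (fderiv ℝ Γ (x, s x) (Pi.single l 1, 0) i μ
                  + ∑ jj : Fin m, fderiv ℝ s x (Pi.single l 1) jj
                      * fderiv ℝ Γ (x, s x) (0, Pi.single jj 1) i μ)
                  * fderiv ℝ L (j x) (0, 0, Pi.single i (Pi.single l 1))) := by
  intro x μ
  simp only [hj] at hEL ⊢
  -- basic smoothness facts
  have hs1 : ContDiff ℝ (⊤ : ℕ∞) (fderiv ℝ s) := hs.fderiv_right (by simp)
  have hjC : ContDiff ℝ (⊤ : ℕ∞) (fun x' => ((x', s x', fun i l => fderiv ℝ s x' (Pi.single l 1) i) :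
      (Fin n → ℝ) × (Fin m → ℝ) × (Fin m → Fin n → ℝ))) := by
    refine contDiff_id.prodMk (hs.prodMk ?_)
    refine contDiff_pi.2 fun i => contDiff_pi.2 fun l => ?_
    exact contDiff_pi.1 (hs1.clm_apply contDiff_const) i
  have hLf : ContDiff ℝ (⊤ : ℕ∞) (fderiv ℝ L) := hL.fderiv_right (by simp)
  have hA : ∀ (i : Fin m) (l : Fin n), DifferentiableAt ℝ
      (fun x' => fderiv ℝ L (x', s x', fun i' l' => fderiv ℝ s x' (Pi.single l' 1) i')
        (0, 0, Pi.single i (Pi.single l 1))) x := by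
    intro i l
    exact ((((hLf.comp hjC)).clm_apply contDiff_const).differentiable (by simp)) x
  have hB : ∀ i : Fin m, DifferentiableAt ℝ
      (fun x' => fderiv ℝ s x' (Pi.single μ 1) i - Γ (x', s x') i μ) x := by
    intro i
    apply DifferentiableAt.sub
    · exact ((contDiff_pi.1 (hs1.clm_apply contDiff_const) i).differentiable (by simp)) x
    · exact ((contDiff_pi.1 (contDiff_pi.1 (hΓ.comp (contDiff_id.prodMk hs)) i) μ).differentiable
        (by simp)) x
  have hLjd : DifferentiableAt ℝ
      (fun x' => L (x', s x', fun i l => fderiv ℝ s x' (Pi.single l 1) i)) x :=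
    ((hL.comp hjC).differentiable (by simp)) x
  -- the per-l derivative computation
  have hFl : ∀ l : Fin n,
      fderiv ℝ (fun x' =>
          (∑ i : Fin m,
            fderiv ℝ L (x', s x', fun i l => fderiv ℝ s x' (Pi.single l 1) i)
                (0, 0, Pi.single i (Pi.single l 1))
              * (fderiv ℝ s x' (Pi.single μ 1) i - Γ (x', s x') i μ))
            - (if l = μ then L (x', s x', fun i l => fderiv ℝ s x' (Pi.single l 1) i) else 0))
        x (Pi.single l 1)
      = (∑ i : Fin m,
          (fderiv ℝ (fun x' => fderiv ℝ L (x', s x', fun i' l' => fderiv ℝ s x' (Pi.single l' 1) i')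
              (0, 0, Pi.single i (Pi.single l 1))) x (Pi.single l 1)
            * (fderiv ℝ s x (Pi.single μ 1) i - Γ (x, s x) i μ)
          + fderiv ℝ L (x, s x, fun i' l' => fderiv ℝ s x (Pi.single l' 1) i')
              (0, 0, Pi.single i (Pi.single l 1))
            * fderiv ℝ (fun x' => fderiv ℝ s x' (Pi.single μ 1) i - Γ (x', s x') i μ)
                x (Pi.single l 1)))
        - (if l = μ then fderiv ℝ
            (fun x' => L (x', s x', fun i l => fderiv ℝ s x' (Pi.single l 1) i))
            x (Pi.single μ 1) else 0) := by
    intro l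
    by_cases hlμ : l = μ
    · subst hlμ
      simp only [eq_self_iff_true, if_true]
      rw [fderiv_fun_sub (DifferentiableAt.fun_sum fun i _ => (hA i l).fun_mul (hB i)) hLjd,
        ContinuousLinearMap.sub_apply]
      congr 1
      exact fderiv_sum_mul
        (f := fun i x' => fderiv ℝ L (x', s x', fun i' l' => fderiv ℝ s x' (Pi.single l' 1) i')
          (0, 0, Pi.single i (Pi.single l 1)))
        (g := fun i x' => fderiv ℝ s x' (Pi.single l 1) i - Γ (x', s x') i l)
        (fun i => hA i l) hB (Pi.single l 1)
    · simp only [if_neg hlμ, sub_zero]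
      exact fderiv_sum_mul
        (f := fun i x' => fderiv ℝ L (x', s x', fun i' l' => fderiv ℝ s x' (Pi.single l' 1) i')
          (0, 0, Pi.single i (Pi.single l 1)))
        (g := fun i x' => fderiv ℝ s x' (Pi.single μ 1) i - Γ (x', s x') i μ)
        (fun i => hA i l) hB (Pi.single l 1)
  -- derivative of B
  have hsym : ∀ v w : Fin n → ℝ, fderiv ℝ (fderiv ℝ s) x v w = fderiv ℝ (fderiv ℝ s) x w v :=
    hs.contDiffAt.isSymmSndFDerivAt (by simp; exact le_trans (by norm_num) (WithTop.coe_le_coe.2 (le_top : (2:ℕ∞) ≤ ⊤)))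
  have hB1 : ∀ i : Fin m, DifferentiableAt ℝ
      (fun x' => fderiv ℝ s x' (Pi.single μ 1) i) x := by
    intro i
    exact ((contDiff_pi.1 (hs1.clm_apply contDiff_const) i).differentiable (by simp)) x
  have hB2 : ∀ i : Fin m, DifferentiableAt ℝ (fun x' => Γ (x', s x') i μ) x := by
    intro i
    exact ((contDiff_pi.1 (contDiff_pi.1 (hΓ.comp (contDiff_id.prodMk hs)) i) μ).differentiable
      (by simp)) x
  have hdB : ∀ (i : Fin m) (l : Fin n),
      fderiv ℝ (fun x' => fderiv ℝ s x' (Pi.single μ 1) i - Γ (x', s x') i μ) x (Pi.single l 1)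
        = fderiv ℝ (fderiv ℝ s) x (Pi.single μ 1) (Pi.single l 1) i
          - (fderiv ℝ Γ (x, s x) (Pi.single l 1, 0) i μ
            + ∑ jj : Fin m, fderiv ℝ s x (Pi.single l 1) jj
                * fderiv ℝ Γ (x, s x) (0, Pi.single jj 1) i μ) := by
    intro i l
    rw [fderiv_fun_sub (hB1 i) (hB2 i), ContinuousLinearMap.sub_apply,
      fderiv_ds hs x (Pi.single μ 1) (Pi.single l 1) i,
      hsym (Pi.single l 1) (Pi.single μ 1),
      fderiv_Gamma hΓ hs x (Pi.single l 1) i μ,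
      clm_decomp2 (fderiv ℝ Γ (x, s x)) (Pi.single l 1) (fderiv ℝ s x (Pi.single l 1)) i μ]
  have hDL : fderiv ℝ (fun x' => L (x', s x', fun i l => fderiv ℝ s x' (Pi.single l 1) i))
        x (Pi.single μ 1)
      = fderiv ℝ L (x, s x, fun i l => fderiv ℝ s x (Pi.single l 1) i) (Pi.single μ 1, 0, 0)
        + (∑ i : Fin m, fderiv ℝ s x (Pi.single μ 1) i
            * fderiv ℝ L (x, s x, fun i l => fderiv ℝ s x (Pi.single l 1) i)
                (0, Pi.single i 1, 0))
        + ∑ i : Fin m, ∑ l : Fin n,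
            fderiv ℝ (fderiv ℝ s) x (Pi.single μ 1) (Pi.single l 1) i
              * fderiv ℝ L (x, s x, fun i l => fderiv ℝ s x (Pi.single l 1) i)
                  (0, 0, Pi.single i (Pi.single l 1)) := by
    rw [fderiv_Lj hL hs x (Pi.single μ 1)]
    exact clm_decomp' (fderiv ℝ L (x, s x, fun i l => fderiv ℝ s x (Pi.single l 1) i))
      (Pi.single μ 1) (fderiv ℝ s x (Pi.single μ 1))
      (fun i l => fderiv ℝ (fderiv ℝ s) x (Pi.single μ 1) (Pi.single l 1) i)
  -- assemble
  have hstep1 : (∑ l : Fin n, fderiv ℝ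
        (fun x' =>
          (∑ i : Fin m,
            fderiv ℝ L (x', s x', fun i l => fderiv ℝ s x' (Pi.single l 1) i)
                (0, 0, Pi.single i (Pi.single l 1))
              * (fderiv ℝ s x' (Pi.single μ 1) i - Γ (x', s x') i μ))
            - (if l = μ then L (x', s x', fun i l => fderiv ℝ s x' (Pi.single l 1) i) else 0))
        x (Pi.single l 1))
      = ∑ l : Fin n, ((∑ i : Fin m,
          (fderiv ℝ (fun x' => fderiv ℝ L (x', s x', fun i' l' => fderiv ℝ s x' (Pi.single l' 1) i')
              (0, 0, Pi.single i (Pi.single l 1))) x (Pi.single l 1)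
            * (fderiv ℝ s x (Pi.single μ 1) i - Γ (x, s x) i μ)
          + fderiv ℝ L (x, s x, fun i' l' => fderiv ℝ s x (Pi.single l' 1) i')
              (0, 0, Pi.single i (Pi.single l 1))
            * fderiv ℝ (fun x' => fderiv ℝ s x' (Pi.single μ 1) i - Γ (x', s x') i μ)
                x (Pi.single l 1)))
        - (if l = μ then fderiv ℝ
            (fun x' => L (x', s x', fun i l => fderiv ℝ s x' (Pi.single l 1) i))
            x (Pi.single μ 1) else 0)) :=
    Finset.sum_congr rfl fun l _ => hFl l
  rw [hstep1, Finset.sum_sub_distrib, Finset.sum_ite_eq' Finset.univ μ]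
  simp only [Finset.mem_univ, if_true]
  have h1 : ∑ l : Fin n, ∑ i : Fin m,
      (fderiv ℝ (fun x' => fderiv ℝ L (x', s x', fun i' l' => fderiv ℝ s x' (Pi.single l' 1) i')
          (0, 0, Pi.single i (Pi.single l 1))) x (Pi.single l 1)
        * (fderiv ℝ s x (Pi.single μ 1) i - Γ (x, s x) i μ)
      + fderiv ℝ L (x, s x, fun i' l' => fderiv ℝ s x (Pi.single l' 1) i')
          (0, 0, Pi.single i (Pi.single l 1))
        * fderiv ℝ (fun x' => fderiv ℝ s x' (Pi.single μ 1) i - Γ (x', s x') i μ)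
            x (Pi.single l 1))
      = (∑ i : Fin m, fderiv ℝ L (x, s x, fun i l => fderiv ℝ s x (Pi.single l 1) i)
            (0, Pi.single i 1, 0)
          * (fderiv ℝ s x (Pi.single μ 1) i - Γ (x, s x) i μ))
        + ∑ i : Fin m, ∑ l : Fin n,
            fderiv ℝ L (x, s x, fun i' l' => fderiv ℝ s x (Pi.single l' 1) i')
              (0, 0, Pi.single i (Pi.single l 1))
            * (fderiv ℝ (fderiv ℝ s) x (Pi.single μ 1) (Pi.single l 1) i
              - (fderiv ℝ Γ (x, s x) (Pi.single l 1, 0) i μ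
                + ∑ jj : Fin m, fderiv ℝ s x (Pi.single l 1) jj
                    * fderiv ℝ Γ (x, s x) (0, Pi.single jj 1) i μ)) := by
    rw [Finset.sum_comm]
    simp only [Finset.sum_add_distrib]
    congr 1
    · refine Finset.sum_congr rfl fun i _ => ?_
      rw [← Finset.sum_mul, ← hEL x i]
    · refine Finset.sum_congr rfl fun i _ => Finset.sum_congr rfl fun l _ => ?_
      rw [hdB i l]
  rw [h1, hDL]
  exact final_alg
    (fderiv ℝ L (x, s x, fun i l => fderiv ℝ s x (Pi.single l 1) i) (Pi.single μ 1, 0, 0))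
    (fun i => fderiv ℝ L (x, s x, fun i l => fderiv ℝ s x (Pi.single l 1) i)
      (0, Pi.single i 1, 0))
    (fun i => Γ (x, s x) i μ)
    (fun i => fderiv ℝ s x (Pi.single μ 1) i)
    (fun i l => fderiv ℝ L (x, s x, fun i l => fderiv ℝ s x (Pi.single l 1) i)
      (0, 0, Pi.single i (Pi.single l 1)))
    (fun i l => fderiv ℝ (fderiv ℝ s) x (Pi.single μ 1) (Pi.single l 1) i)
    (fun i l => fderiv ℝ Γ (x, s x) (Pi.single l 1, 0) i μ
      + ∑ jj : Fin m, fderiv ℝ s x (Pi.single l 1) jj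
          * fderiv ℝ Γ (x, s x) (0, Pi.single jj 1) i μ)
end

section
/- Let u = Σ_λ u^λ(x) ∂_λ + Σ_i u^i(y) ∂_i be a projectable vector field on R^n × R^m and s a solution of the first-order Euler-Lagrange equations of L. Then Σ_λ d/dx^λ [Σ_i π^λ_i (u^i − Σ_μ u^μ ∂_μ s^i) + u^λ L] equals the Lie derivative term (∂_λ u^λ) L + [Σ_λ u^λ ∂_λ + Σ_i u^i ∂_{y^i} + Σ_{i,λ}(∂_λ u^i + Σ_j v^j_λ ∂_{y^j} u^i − Σ_μ v^i_μ ∂_λ u^μ) ∂_{v^λ_i}] L, all evaluated along (x, s(x), Ds(x)). -/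
lemma stmt8_vec_decomp {k : ℕ} (b : Fin k → ℝ) :
    b = ∑ i, b i • (Pi.single i 1 : Fin k → ℝ) := by
  conv_lhs => rw [← Finset.univ_sum_single b]
  refine Finset.sum_congr rfl fun i _ => ?_
  rw [← Pi.single_smul, smul_eq_mul, mul_one]

lemma stmt8_mat_decomp {k l : ℕ} (c : Fin k → Fin l → ℝ) :
    c = ∑ i, ∑ j, c i j • (Pi.single i (Pi.single j 1) : Fin k → Fin l → ℝ) := by
  conv_lhs => rw [← Finset.univ_sum_single c]
  refine Finset.sum_congr rfl fun i _ => ?_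
  conv_lhs => rw [stmt8_vec_decomp (c i)]
  rw [show (Pi.single i (∑ j : Fin l, c i j • (Pi.single j 1 : Fin l → ℝ)) : Fin k → Fin l → ℝ)
      = (LinearMap.single ℝ (fun _ : Fin k => (Fin l → ℝ)) i)
          (∑ j : Fin l, c i j • (Pi.single j 1 : Fin l → ℝ)) from rfl, map_sum]
  refine Finset.sum_congr rfl fun j _ => ?_
  rw [map_smul]
  rfl

lemma stmt8_clm_pi {k : ℕ} (ψ : (Fin k → ℝ) →L[ℝ] ℝ) (b : Fin k → ℝ) :
    ψ b = ∑ i, b i * ψ (Pi.single i 1) := by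
  conv_lhs => rw [stmt8_vec_decomp b]
  rw [map_sum]
  simp [smul_eq_mul]

lemma stmt8_clm_mat {k l : ℕ} (ψ : (Fin k → Fin l → ℝ) →L[ℝ] ℝ) (c : Fin k → Fin l → ℝ) :
    ψ c = ∑ i, ∑ j, c i j * ψ (Pi.single i (Pi.single j 1)) := by
  conv_lhs => rw [stmt8_mat_decomp c]
  rw [map_sum]
  refine Finset.sum_congr rfl fun i _ => ?_
  rw [map_sum]
  simp [smul_eq_mul]

lemma stmt8_clm_decomp {n m : ℕ}
    (φ : ((Fin n → ℝ) × (Fin m → ℝ) × (Fin m → Fin n → ℝ)) →L[ℝ] ℝ)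
    (a : Fin n → ℝ) (b : Fin m → ℝ) (c : Fin m → Fin n → ℝ) :
    φ (a, b, c) = φ (a, 0, 0) + (∑ i, b i * φ (0, Pi.single i 1, 0))
      + ∑ i, ∑ l, c i l * φ (0, 0, Pi.single i (Pi.single l 1)) := by
  have h : (a, b, c) = (a, (0:Fin m → ℝ), (0:Fin m → Fin n → ℝ))
      + ((0:Fin n → ℝ), b, (0:Fin m → Fin n → ℝ))
      + ((0:Fin n → ℝ), (0:Fin m → ℝ), c) := by simp
  rw [h, map_add, map_add]
  congr 1
  · congr 1
    have : ((0:Fin n → ℝ), b, (0:Fin m → Fin n → ℝ))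
        = ((0 : (Fin m → ℝ) →L[ℝ] (Fin n → ℝ)).prod
            ((ContinuousLinearMap.id ℝ (Fin m → ℝ)).prod 0)) b := by
      simp
    rw [this, ← ContinuousLinearMap.comp_apply, stmt8_clm_pi]
    refine Finset.sum_congr rfl fun i _ => ?_
    simp
  · have : ((0:Fin n → ℝ), (0:Fin m → ℝ), c)
        = ((0 : (Fin m → Fin n → ℝ) →L[ℝ] (Fin n → ℝ)).prod
            ((0 : (Fin m → Fin n → ℝ) →L[ℝ] (Fin m → ℝ)).prod
              (ContinuousLinearMap.id ℝ (Fin m → Fin n → ℝ)))) c := by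
      simp
    rw [this, ← ContinuousLinearMap.comp_apply, stmt8_clm_mat]
    refine Finset.sum_congr rfl fun i _ => Finset.sum_congr rfl fun l _ => ?_
    simp

lemma stmt8_sum3 {a b c : ℕ} (f : Fin a → Fin b → Fin c → ℝ) :
    ∑ x, ∑ y, ∑ z, f x y z = ∑ z, ∑ y, ∑ x, f x y z := by
  calc ∑ x, ∑ y, ∑ z, f x y z
      = ∑ x, ∑ z, ∑ y, f x y z := Finset.sum_congr rfl fun x _ => Finset.sum_comm
    _ = ∑ z, ∑ x, ∑ y, f x y z := Finset.sum_comm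
    _ = ∑ z, ∑ y, ∑ x, f x y z := Finset.sum_congr rfl fun z _ => Finset.sum_comm

lemma stmt8_algebra {n m : ℕ} (A : ℝ) (B uBv : Fin n → ℝ) (C uVv : Fin m → ℝ)
    (P : Fin m → Fin n → ℝ) (sp : Fin n → Fin m → ℝ) (uV' : Fin m → Fin m → ℝ)
    (uB' : Fin n → Fin n → ℝ) (spp : Fin n → Fin n → Fin m → ℝ)
    (hsym : ∀ a b i, spp a b i = spp b a i) :
    (∑ i, C i * (uVv i - ∑ μ, uBv μ * sp μ i))
      + (∑ l, ∑ i, P i l * ((∑ jj, sp l jj * uV' jj i)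
          - ∑ μ, (uB' l μ * sp μ i + uBv μ * spp l μ i)))
      + (∑ l, uB' l l) * A
      + (∑ l, uBv l * (B l + (∑ i, sp l i * C i) + ∑ i, ∑ μ, spp l μ i * P i μ))
    = (∑ l, uB' l l) * A + (∑ l, uBv l * B l) + (∑ i, uVv i * C i)
      + ∑ i, ∑ l, ((∑ jj, sp l jj * uV' jj i) - ∑ μ, sp μ i * uB' l μ) * P i l := by
  have hE : ∑ i, C i * uVv i = ∑ i, uVv i * C i :=
    Finset.sum_congr rfl fun i _ => mul_comm _ _
  have hA : (∑ i, ∑ μ, C i * (uBv μ * sp μ i)) = ∑ l, ∑ i, uBv l * (sp l i * C i) := by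
    rw [Finset.sum_comm]
    exact Finset.sum_congr rfl fun l _ => Finset.sum_congr rfl fun i _ => by ring
  have hC : (∑ l, ∑ i, ∑ jj, P i l * (sp l jj * uV' jj i))
      = ∑ i, ∑ l, ∑ jj, sp l jj * uV' jj i * P i l := by
    rw [Finset.sum_comm]
    exact Finset.sum_congr rfl fun i _ => Finset.sum_congr rfl fun l _ =>
      Finset.sum_congr rfl fun jj _ => by ring
  have hD : (∑ l, ∑ i, ∑ μ, P i l * (uB' l μ * sp μ i))
      = ∑ i, ∑ l, ∑ μ, sp μ i * uB' l μ * P i l := by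
    rw [Finset.sum_comm]
    exact Finset.sum_congr rfl fun i _ => Finset.sum_congr rfl fun l _ =>
      Finset.sum_congr rfl fun μ _ => by ring
  have hB : (∑ l, ∑ i, ∑ μ, P i l * (uBv μ * spp l μ i))
      = ∑ l, ∑ i, ∑ μ, uBv l * (spp l μ i * P i μ) := by
    calc ∑ l, ∑ i, ∑ μ, P i l * (uBv μ * spp l μ i)
        = ∑ μ, ∑ i, ∑ l, P i l * (uBv μ * spp l μ i) := stmt8_sum3 _
      _ = ∑ l, ∑ i, ∑ μ, uBv l * (spp l μ i * P i μ) :=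
          Finset.sum_congr rfl fun μ _ => Finset.sum_congr rfl fun i _ =>
            Finset.sum_congr rfl fun l _ => by rw [hsym l μ i]; ring
  simp only [mul_sub, sub_mul, mul_add, add_mul, Finset.sum_add_distrib,
    Finset.sum_sub_distrib, Finset.mul_sum, Finset.sum_mul]
  linarith [hE, hA, hB, hC, hD]

noncomputable def stmt8Phi (n m : ℕ) :
    ((Fin n → ℝ) →L[ℝ] (Fin m → ℝ)) →L[ℝ] (Fin m → Fin n → ℝ) :=
  ContinuousLinearMap.pi fun i => ContinuousLinearMap.pi fun l =>
    (ContinuousLinearMap.proj i).comp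
      (ContinuousLinearMap.apply ℝ (Fin m → ℝ) (Pi.single l 1))

lemma stmt8Phi_apply {n m : ℕ} (A : (Fin n → ℝ) →L[ℝ] (Fin m → ℝ)) :
    stmt8Phi n m A = fun i l => A (Pi.single l 1) i := rfl


lemma stmt8_clm_pi' {k k' : ℕ} (T : (Fin k → ℝ) →L[ℝ] (Fin k' → ℝ)) (b : Fin k → ℝ) (i : Fin k') :
    T b i = ∑ jj, b jj * T (Pi.single jj 1) i := by
  have := stmt8_clm_pi ((ContinuousLinearMap.proj i).comp T) b
  simpa using this

lemma stmt8_main_algebra {n m : ℕ} (A : ℝ) (B uBv : Fin n → ℝ) (C uVv : Fin m → ℝ)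
    (P Q : Fin m → Fin n → ℝ) (sp : Fin n → Fin m → ℝ) (uV' : Fin m → Fin m → ℝ)
    (uB' : Fin n → Fin n → ℝ) (spp : Fin n → Fin n → Fin m → ℝ)
    (hsym : ∀ a b i, spp a b i = spp b a i)
    (hQ : ∑ l, ∑ i, (uVv i - ∑ μ, uBv μ * sp μ i) * Q i l
      = ∑ i, C i * (uVv i - ∑ μ, uBv μ * sp μ i)) :
    ∑ l, ((∑ i, (P i l * ((∑ jj, sp l jj * uV' jj i)
            - ∑ μ, (uBv μ * spp l μ i + sp μ i * uB' l μ))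
          + (uVv i - ∑ μ, uBv μ * sp μ i) * Q i l))
        + (uBv l * (B l + ∑ i, sp l i * C i + ∑ i, ∑ μ, spp l μ i * P i μ)
          + A * uB' l l))
    = (∑ l, uB' l l) * A + ∑ l, uBv l * B l + ∑ i, uVv i * C i
      + ∑ i, ∑ l, ((∑ jj, sp l jj * uV' jj i) - ∑ μ, sp μ i * uB' l μ) * P i l := by
  have hE : ∑ i, C i * uVv i = ∑ i, uVv i * C i :=
    Finset.sum_congr rfl fun i _ => mul_comm _ _
  have hA : (∑ i, ∑ μ, C i * (uBv μ * sp μ i)) = ∑ l, ∑ i, uBv l * (sp l i * C i) := by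
    rw [Finset.sum_comm]
    exact Finset.sum_congr rfl fun l _ => Finset.sum_congr rfl fun i _ => by ring
  have hC : (∑ l, ∑ i, ∑ jj, P i l * (sp l jj * uV' jj i))
      = ∑ i, ∑ l, ∑ jj, sp l jj * uV' jj i * P i l := by
    rw [Finset.sum_comm]
    exact Finset.sum_congr rfl fun i _ => Finset.sum_congr rfl fun l _ =>
      Finset.sum_congr rfl fun jj _ => by ring
  have hD : (∑ l, ∑ i, ∑ μ, P i l * (sp μ i * uB' l μ))
      = ∑ i, ∑ l, ∑ μ, sp μ i * uB' l μ * P i l := by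
    rw [Finset.sum_comm]
    exact Finset.sum_congr rfl fun i _ => Finset.sum_congr rfl fun l _ =>
      Finset.sum_congr rfl fun μ _ => by ring
  have hB : (∑ l, ∑ i, ∑ μ, P i l * (uBv μ * spp l μ i))
      = ∑ l, ∑ i, ∑ μ, uBv l * (spp l μ i * P i μ) := by
    calc ∑ l, ∑ i, ∑ μ, P i l * (uBv μ * spp l μ i)
        = ∑ μ, ∑ i, ∑ l, P i l * (uBv μ * spp l μ i) := stmt8_sum3 _
      _ = ∑ l, ∑ i, ∑ μ, uBv l * (spp l μ i * P i μ) :=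
          Finset.sum_congr rfl fun μ _ => Finset.sum_congr rfl fun i _ =>
            Finset.sum_congr rfl fun l _ => by rw [hsym l μ i]; ring
  have hF : ∑ l, A * uB' l l = ∑ l, uB' l l * A :=
    Finset.sum_congr rfl fun l _ => mul_comm _ _
  simp only [mul_sub, sub_mul, mul_add, add_mul, Finset.sum_add_distrib,
    Finset.sum_sub_distrib, Finset.mul_sum, Finset.sum_mul] at hQ ⊢
  linarith [hE, hA, hB, hC, hD, hQ, hF]

/-- The first Noether-type identity: for a projectable vector field
`u = u^λ(x)∂_λ + u^i(y)∂_i` and a solution `s` of the Euler-Lagrange equations,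
the divergence of the current `π^λ_i(u^i − u^μ ∂_μ s^i) + u^λ L` equals the Lie
derivative term of the Lagrangian along the jet prolongation of `u`. -/
theorem stmt8 (n m : ℕ)
    (L : (Fin n → ℝ) × (Fin m → ℝ) × (Fin m → Fin n → ℝ) → ℝ) (hL : ContDiff ℝ (⊤ : ℕ∞) L)
    (uB : (Fin n → ℝ) → (Fin n → ℝ)) (huB : ContDiff ℝ (⊤ : ℕ∞) uB)
    (uV : (Fin m → ℝ) → (Fin m → ℝ)) (huV : ContDiff ℝ (⊤ : ℕ∞) uV)
    (s : (Fin n → ℝ) → (Fin m → ℝ)) (hs : ContDiff ℝ (⊤ : ℕ∞) s)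
    (j : (Fin n → ℝ) → (Fin n → ℝ) × (Fin m → ℝ) × (Fin m → Fin n → ℝ))
    (hj : j = fun x => (x, s x, fun i l => fderiv ℝ s x (Pi.single l 1) i))
    (hEL : ∀ (x : Fin n → ℝ) (i : Fin m),
      fderiv ℝ L (j x) (0, Pi.single i 1, 0)
        = ∑ l : Fin n, fderiv ℝ
            (fun x' => fderiv ℝ L (j x') (0, 0, Pi.single i (Pi.single l 1)))
            x (Pi.single l 1)) :
    ∀ x : Fin n → ℝ,
      (∑ l : Fin n, fderiv ℝ
          (fun x' =>
            (∑ i : Fin m,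
              fderiv ℝ L (j x') (0, 0, Pi.single i (Pi.single l 1))
                * (uV (s x') i - ∑ μ : Fin n, uB x' μ * fderiv ℝ s x' (Pi.single μ 1) i))
              + uB x' l * L (j x'))
          x (Pi.single l 1))
      = (∑ l : Fin n, fderiv ℝ uB x (Pi.single l 1) l) * L (j x)
        + (∑ l : Fin n, uB x l * fderiv ℝ L (j x) (Pi.single l 1, 0, 0))
        + (∑ i : Fin m, uV (s x) i * fderiv ℝ L (j x) (0, Pi.single i 1, 0))
        + ∑ i : Fin m, ∑ l : Fin n,
            ((∑ jj : Fin m, fderiv ℝ s x (Pi.single l 1) jj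
                * fderiv ℝ uV (s x) (Pi.single jj 1) i)
              - ∑ μ : Fin n, fderiv ℝ s x (Pi.single μ 1) i
                  * fderiv ℝ uB x (Pi.single l 1) μ)
            * fderiv ℝ L (j x) (0, 0, Pi.single i (Pi.single l 1)) := by
  intro x
  have hsd := hs.differentiable (by simp)
  have h1 : ∀ y, HasFDerivAt s (fderiv ℝ s y) y := fun y => (hsd y).hasFDerivAt
  have hfs : ContDiff ℝ (⊤ : ℕ∞) (fderiv ℝ s) := hs.fderiv_right (by simp)
  have h2 : HasFDerivAt (fderiv ℝ s) (fderiv ℝ (fderiv ℝ s) x) x :=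
    ((hfs.differentiable (by simp)) x).hasFDerivAt
  have hsym := second_derivative_symmetric h1 h2
  have hj' : j = fun x' => (x', s x', stmt8Phi n m (fderiv ℝ s x')) := by
    rw [hj]; funext x'; rw [stmt8Phi_apply]
  have hjc : ContDiff ℝ (⊤ : ℕ∞) j := by
    rw [hj']; exact contDiff_id.prodMk (hs.prodMk ((stmt8Phi n m).contDiff.comp hfs))
  have hjd : HasFDerivAt j
      ((ContinuousLinearMap.id ℝ (Fin n → ℝ)).prod ((fderiv ℝ s x).prod
        ((stmt8Phi n m).comp (fderiv ℝ (fderiv ℝ s) x)))) x := by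
    rw [hj']
    exact (hasFDerivAt_id x).prodMk ((h1 x).prodMk (((stmt8Phi n m).hasFDerivAt).comp x h2))
  have hAd : HasFDerivAt (fun x' => L (j x'))
      ((fderiv ℝ L (j x)).comp
        ((ContinuousLinearMap.id ℝ (Fin n → ℝ)).prod ((fderiv ℝ s x).prod
          ((stmt8Phi n m).comp (fderiv ℝ (fderiv ℝ s) x))))) x :=
    ((hL.differentiable (by simp) (j x)).hasFDerivAt).comp x hjd
  have hPc : ∀ v : (Fin n → ℝ) × (Fin m → ℝ) × (Fin m → Fin n → ℝ),
      ContDiff ℝ (⊤ : ℕ∞) (fun x' => fderiv ℝ L (j x') v) := fun v =>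
    ((hL.fderiv_right (by simp)).comp hjc).clm_apply contDiff_const
  have hPd : ∀ v, HasFDerivAt (fun x' => fderiv ℝ L (j x') v)
      (fderiv ℝ (fun x' => fderiv ℝ L (j x') v) x) x := fun v =>
    (((hPc v).differentiable (by simp)) x).hasFDerivAt
  have hBd : ∀ μ : Fin n, HasFDerivAt (fun x' => uB x' μ)
      ((ContinuousLinearMap.proj μ).comp (fderiv ℝ uB x)) x := fun μ =>
    by simpa [Function.comp_def] using
      (ContinuousLinearMap.hasFDerivAt (ContinuousLinearMap.proj μ)).comp x
        ((huB.differentiable (by simp) x).hasFDerivAt)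
  have hSd : ∀ (μ : Fin n) (i : Fin m), HasFDerivAt (fun x' => fderiv ℝ s x' (Pi.single μ 1) i)
      (((ContinuousLinearMap.proj i).comp
          (ContinuousLinearMap.apply ℝ (Fin m → ℝ) (Pi.single μ 1))).comp
        (fderiv ℝ (fderiv ℝ s) x)) x := fun μ i =>
    by simpa [Function.comp_def] using
      (ContinuousLinearMap.hasFDerivAt ((ContinuousLinearMap.proj i).comp
        (ContinuousLinearMap.apply ℝ (Fin m → ℝ) (Pi.single μ 1)))).comp x h2
  have hVd : ∀ i : Fin m, HasFDerivAt (fun x' => uV (s x') i)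
      ((ContinuousLinearMap.proj i).comp
        ((fderiv ℝ uV (s x)).comp (fderiv ℝ s x))) x := fun i =>
    by simpa [Function.comp_def] using
      (ContinuousLinearMap.hasFDerivAt (ContinuousLinearMap.proj i)).comp x
        (((huV.differentiable (by simp) (s x)).hasFDerivAt).comp x (h1 x))
  have hwd : ∀ i : Fin m, HasFDerivAt
      (fun x' => uV (s x') i - ∑ μ, uB x' μ * fderiv ℝ s x' (Pi.single μ 1) i)
      (((ContinuousLinearMap.proj i).comp
          ((fderiv ℝ uV (s x)).comp (fderiv ℝ s x)))
        - ∑ μ, (uB x μ • (((ContinuousLinearMap.proj i).comp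
              (ContinuousLinearMap.apply ℝ (Fin m → ℝ) (Pi.single μ 1))).comp
            (fderiv ℝ (fderiv ℝ s) x))
          + (fderiv ℝ s x (Pi.single μ 1) i) •
              ((ContinuousLinearMap.proj μ).comp (fderiv ℝ uB x)))) x := fun i =>
    (hVd i).sub (HasFDerivAt.fun_sum fun μ _ => (hBd μ).fun_mul (hSd μ i))
  have hgd : ∀ l : Fin n, fderiv ℝ
      (fun x' =>
        (∑ i : Fin m,
          fderiv ℝ L (j x') (0, 0, Pi.single i (Pi.single l 1))
            * (uV (s x') i - ∑ μ : Fin n, uB x' μ * fderiv ℝ s x' (Pi.single μ 1) i))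
          + uB x' l * L (j x')) x
      = (∑ i : Fin m,
          ((fderiv ℝ L (j x) (0, 0, Pi.single i (Pi.single l 1))) •
            (((ContinuousLinearMap.proj i).comp
                ((fderiv ℝ uV (s x)).comp (fderiv ℝ s x)))
              - ∑ μ, (uB x μ • (((ContinuousLinearMap.proj i).comp
                    (ContinuousLinearMap.apply ℝ (Fin m → ℝ) (Pi.single μ 1))).comp
                  (fderiv ℝ (fderiv ℝ s) x))
                + (fderiv ℝ s x (Pi.single μ 1) i) •
                    ((ContinuousLinearMap.proj μ).comp (fderiv ℝ uB x))))
          + (uV (s x) i - ∑ μ, uB x μ * fderiv ℝ s x (Pi.single μ 1) i) •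
              fderiv ℝ (fun x' => fderiv ℝ L (j x') (0, 0, Pi.single i (Pi.single l 1))) x))
        + (uB x l • ((fderiv ℝ L (j x)).comp
            ((ContinuousLinearMap.id ℝ (Fin n → ℝ)).prod ((fderiv ℝ s x).prod
              ((stmt8Phi n m).comp (fderiv ℝ (fderiv ℝ s) x)))))
          + L (j x) • ((ContinuousLinearMap.proj l).comp (fderiv ℝ uB x))) := fun l =>
    HasFDerivAt.fderiv
      ((HasFDerivAt.fun_sum fun i _ => (hPd _).fun_mul (hwd i)).fun_add ((hBd l).fun_mul hAd))
  simp only [hgd, ContinuousLinearMap.add_apply, ContinuousLinearMap.coe_sum',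
    Finset.sum_apply, ContinuousLinearMap.smul_apply, ContinuousLinearMap.sub_apply,
    ContinuousLinearMap.comp_apply, ContinuousLinearMap.proj_apply,
    ContinuousLinearMap.apply_apply, ContinuousLinearMap.prod_apply,
    ContinuousLinearMap.coe_id', id_eq, smul_eq_mul, stmt8Phi_apply]
  have hV' : ∀ (l : Fin n) (i : Fin m), fderiv ℝ uV (s x) (fderiv ℝ s x (Pi.single l 1)) i
      = ∑ jj, fderiv ℝ s x (Pi.single l 1) jj * fderiv ℝ uV (s x) (Pi.single jj 1) i :=
    fun l i => stmt8_clm_pi' _ _ _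
  have hdec : ∀ l : Fin n, fderiv ℝ L (j x) (Pi.single l 1, fderiv ℝ s x (Pi.single l 1),
        fun i μ => fderiv ℝ (fderiv ℝ s) x (Pi.single l 1) (Pi.single μ 1) i)
      = fderiv ℝ L (j x) (Pi.single l 1, 0, 0)
        + (∑ i, fderiv ℝ s x (Pi.single l 1) i * fderiv ℝ L (j x) (0, Pi.single i 1, 0))
        + ∑ i, ∑ μ, fderiv ℝ (fderiv ℝ s) x (Pi.single l 1) (Pi.single μ 1) i
            * fderiv ℝ L (j x) (0, 0, Pi.single i (Pi.single μ 1)) :=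
    fun l => stmt8_clm_decomp _ _ _ _
  have hswap : ∑ l : Fin n, ∑ i : Fin m,
        (uV (s x) i - ∑ μ : Fin n, uB x μ * fderiv ℝ s x (Pi.single μ 1) i) *
          (fderiv ℝ (fun x' => fderiv ℝ L (j x') (0, 0, Pi.single i (Pi.single l 1))) x)
            (Pi.single l 1)
      = ∑ i : Fin m, fderiv ℝ L (j x) (0, Pi.single i 1, 0) *
          (uV (s x) i - ∑ μ : Fin n, uB x μ * fderiv ℝ s x (Pi.single μ 1) i) := by
    rw [Finset.sum_comm]
    refine Finset.sum_congr rfl fun i _ => ?_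
    rw [← Finset.mul_sum, ← hEL x i, mul_comm]
  simp only [hV', hdec]
  exact stmt8_main_algebra (L (j x))
    (fun l => fderiv ℝ L (j x) (Pi.single l 1, 0, 0)) (uB x)
    (fun i => fderiv ℝ L (j x) (0, Pi.single i 1, 0)) (uV (s x))
    (fun i l => fderiv ℝ L (j x) (0, 0, Pi.single i (Pi.single l 1)))
    (fun i l => (fderiv ℝ (fun x' => fderiv ℝ L (j x') (0, 0, Pi.single i (Pi.single l 1))) x)
      (Pi.single l 1))
    (fun l i => fderiv ℝ s x (Pi.single l 1) i)
    (fun jj i => fderiv ℝ uV (s x) (Pi.single jj 1) i)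
    (fun l μ => fderiv ℝ uB x (Pi.single l 1) μ)
    (fun l μ i => fderiv ℝ (fderiv ℝ s) x (Pi.single l 1) (Pi.single μ 1) i)
    (fun a b i => congrFun (hsym (Pi.single a 1) (Pi.single b 1)) i)
    hswap
end

section
/- If u is a vertical vector field (u^λ = 0) whose jet prolongation leaves the Lagrangian invariant, i.e. the Lie derivative of L along ū vanishes identically, then along any solution s of the Euler-Lagrange equations the Noether current J^λ = Σ_i π^λ_i u^i(s(x)) is conserved: Σ_λ d/dx^λ J^λ = 0. -/
/-- Noether's conservation law: for a vertical vector field `u = u^i(y)∂_i` whose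
jet prolongation leaves `L` invariant, the current `J^λ = π^λ_i u^i(s(x))` is
conserved along any solution of the Euler-Lagrange equations. -/
theorem stmt9 (n m : ℕ)
    (L : (Fin n → ℝ) × (Fin m → ℝ) × (Fin m → Fin n → ℝ) → ℝ) (hL : ContDiff ℝ (⊤ : ℕ∞) L)
    (uV : (Fin m → ℝ) → (Fin m → ℝ)) (huV : ContDiff ℝ (⊤ : ℕ∞) uV)
    -- invariance of the Lagrangian under the jet prolongation of `u`
    (hinv : ∀ (x : Fin n → ℝ) (y : Fin m → ℝ) (v : Fin m → Fin n → ℝ),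
      (∑ i : Fin m, uV y i * fderiv ℝ L (x, y, v) (0, Pi.single i 1, 0))
        + (∑ i : Fin m, ∑ l : Fin n,
            (∑ jj : Fin m, v jj l * fderiv ℝ uV y (Pi.single jj 1) i)
              * fderiv ℝ L (x, y, v) (0, 0, Pi.single i (Pi.single l 1))) = 0)
    (s : (Fin n → ℝ) → (Fin m → ℝ)) (hs : ContDiff ℝ (⊤ : ℕ∞) s)
    (j : (Fin n → ℝ) → (Fin n → ℝ) × (Fin m → ℝ) × (Fin m → Fin n → ℝ))
    (hj : j = fun x => (x, s x, fun i l => fderiv ℝ s x (Pi.single l 1) i))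
    (hEL : ∀ (x : Fin n → ℝ) (i : Fin m),
      fderiv ℝ L (j x) (0, Pi.single i 1, 0)
        = ∑ l : Fin n, fderiv ℝ
            (fun x' => fderiv ℝ L (j x') (0, 0, Pi.single i (Pi.single l 1)))
            x (Pi.single l 1)) :
    ∀ x : Fin n → ℝ,
      (∑ l : Fin n, fderiv ℝ
          (fun x' => ∑ i : Fin m,
            fderiv ℝ L (j x') (0, 0, Pi.single i (Pi.single l 1)) * uV (s x') i)
          x (Pi.single l 1)) = 0 := by
  intro x
  -- smoothness facts
  have hds : ContDiff ℝ (⊤ : ℕ∞) (fderiv ℝ s) := hs.fderiv_right (by simp)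
  have hjs : ContDiff ℝ (⊤ : ℕ∞) j := by
    rw [hj]
    refine contDiff_id.prodMk (hs.prodMk ?_)
    refine contDiff_pi.2 fun i => contDiff_pi.2 fun l => ?_
    exact contDiff_pi.1 (hds.clm_apply contDiff_const) i
  have hdL : ContDiff ℝ (⊤ : ℕ∞) (fderiv ℝ L) := hL.fderiv_right (by simp)
  have hπd : ∀ (c : (Fin n → ℝ) × (Fin m → ℝ) × (Fin m → Fin n → ℝ)) (x' : Fin n → ℝ),
      DifferentiableAt ℝ (fun x'' => fderiv ℝ L (j x'') c) x' := fun c x' =>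
    (((hdL.comp hjs).clm_apply contDiff_const).differentiable (by simp)) x'
  have hgd : ∀ (i : Fin m) (x' : Fin n → ℝ),
      DifferentiableAt ℝ (fun x'' => uV (s x'') i) x' := fun i x' =>
    ((contDiff_pi.1 (huV.comp hs) i).differentiable (by simp)) x'
  -- chain rule for u∘s
  have hchain : ∀ (i : Fin m) (l : Fin n),
      fderiv ℝ (fun x' => uV (s x') i) x (Pi.single l 1)
        = ∑ jj : Fin m, fderiv ℝ s x (Pi.single l 1) jj
            * fderiv ℝ uV (s x) (Pi.single jj 1) i := by
    intro i l
    have hus : DifferentiableAt ℝ (uV ∘ s) x :=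
      (huV.differentiable (by simp) _).comp x (hs.differentiable (by simp) x)
    have h1 : (fun x' => uV (s x') i)
        = (⇑(ContinuousLinearMap.proj i : (Fin m → ℝ) →L[ℝ] ℝ)) ∘ (uV ∘ s) := rfl
    rw [h1, fderiv_comp x (ContinuousLinearMap.proj i :
        (Fin m → ℝ) →L[ℝ] ℝ).differentiableAt hus,
      fderiv_comp x (huV.differentiable (by simp) _) (hs.differentiable (by simp) x)]
    simp only [ContinuousLinearMap.fderiv, ContinuousLinearMap.coe_comp',
      Function.comp_apply, ContinuousLinearMap.proj_apply]
    have hw : fderiv ℝ s x (Pi.single l 1) = ∑ jj : Fin m,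
        fderiv ℝ s x (Pi.single l 1) jj • (Pi.single jj 1 : Fin m → ℝ) := by
      ext k; simp [Pi.single_apply, Finset.sum_apply, eq_comm]
    rw [hw, map_sum]
    simp [Finset.sum_apply, smul_eq_mul, Pi.single_apply, Finset.sum_ite_eq', mul_comm]
  -- expand the derivative of each product
  have key : ∀ l : Fin n,
      fderiv ℝ (fun x' => ∑ i : Fin m,
          fderiv ℝ L (j x') (0, 0, Pi.single i (Pi.single l 1)) * uV (s x') i)
        x (Pi.single l 1)
      = ∑ i : Fin m,
          (uV (s x) i * fderiv ℝ (fun x' =>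
              fderiv ℝ L (j x') (0, 0, Pi.single i (Pi.single l 1))) x (Pi.single l 1)
            + fderiv ℝ L (j x) (0, 0, Pi.single i (Pi.single l 1))
              * (∑ jj : Fin m, fderiv ℝ s x (Pi.single l 1) jj
                  * fderiv ℝ uV (s x) (Pi.single jj 1) i)) := by
    intro l
    rw [fderiv_fun_sum (fun i _ => (hπd _ x).fun_mul (hgd i x))]
    rw [ContinuousLinearMap.sum_apply]
    refine Finset.sum_congr rfl fun i _ => ?_
    rw [fderiv_fun_mul (hπd _ x) (hgd i x)]
    simp only [ContinuousLinearMap.add_apply, ContinuousLinearMap.smul_apply, smul_eq_mul]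
    rw [hchain i l]
    ring
  calc (∑ l : Fin n, fderiv ℝ (fun x' => ∑ i : Fin m,
          fderiv ℝ L (j x') (0, 0, Pi.single i (Pi.single l 1)) * uV (s x') i)
        x (Pi.single l 1))
      = (∑ i : Fin m, uV (s x) i * fderiv ℝ L (j x) (0, Pi.single i 1, 0))
        + (∑ i : Fin m, ∑ l : Fin n,
            (∑ jj : Fin m, fderiv ℝ s x (Pi.single l 1) jj
                * fderiv ℝ uV (s x) (Pi.single jj 1) i)
              * fderiv ℝ L (j x) (0, 0, Pi.single i (Pi.single l 1))) := by
        simp only [key, Finset.sum_add_distrib]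
        rw [Finset.sum_comm]
        congr 1
        · refine Finset.sum_congr rfl fun i _ => ?_
          rw [← Finset.mul_sum, ← hEL x i]
        · rw [Finset.sum_comm]
          exact Finset.sum_congr rfl fun i _ => Finset.sum_congr rfl fun l _ => mul_comm _ _
    _ = 0 := by
        have := hinv x (s x) (fun i l => fderiv ℝ s x (Pi.single l 1) i)
        rw [hj]
        simpa using this
end
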